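/- Let G be a finite abelian group with uniform measure μ, f : G → [0,∞) a density, and δ > 0. Then Spec_δ(f) is covered by a set Λ ⊆ Ĝ of size at most 4 Ent_μ(f)/δ²: every γ ∈ Spec_δ(f) equals Σ_{λ∈Λ} ε_λ λ with ε_λ ∈ {−1,0,1} (Chang's theorem). -/

import Mathlib

/-!
Take `Λ` a maximal dissociated subset of the spectrum: by maximality the whole spectrum lies in
the `{-1, 0, 1}`-span of `Λ`, so it suffices to bound `|Λ|`. Rotate each `γ ∈ Λ` by the phase
`w_γ` of `f̂(γ)` and put `g = δ ∑_{γ ∈ Λ} Re (w_γ γ)`, so that `𝔼[f g] ≥ |Λ| δ²`. Dissociated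
characters behave like independent random signs: bounding `exp (δ Re z)` by the chord
`cosh δ + sinh δ Re z` and expanding the product, every nonconstant term averages to zero, whence
`𝔼[exp g] ≤ cosh δ ^ |Λ| ≤ exp (|Λ| δ² / 2)`. The entropy duality
`𝔼[f g] ≤ Ent(f) + log 𝔼[exp g]` then gives `|Λ| δ² ≤ 2 Ent(f)`.
-/

open Finset Complex
open scoped ComplexConjugate

namespace Real

lemma mul_le_mul_log_add_exp_sub {a : ℝ} (ha : 0 ≤ a) (b : ℝ) :
    a * b ≤ a * log a + exp b - a := by
  rcases ha.eq_or_lt with rfl | ha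
  · simp [(exp_pos b).le]
  · have h := add_one_le_exp (b - log a)
    rw [exp_sub, exp_log ha, le_div_iff₀ ha] at h
    linarith

lemma sum_mul_le_sum_mul_log_add_mul {ι : Type*} {s : Finset ι} {f : ι → ℝ}
    (hf : ∀ i ∈ s, 0 ≤ f i) (g : ι → ℝ) {C : ℝ}
    (hC : ∑ i ∈ s, exp (g i) ≤ exp C * ∑ i ∈ s, f i) :
    ∑ i ∈ s, f i * g i ≤ ∑ i ∈ s, f i * log (f i) + C * ∑ i ∈ s, f i := by
  have hyoung : ∑ i ∈ s, f i * (g i - C) ≤ ∑ i ∈ s, (f i * log (f i) + exp (g i - C) - f i) :=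
    sum_le_sum fun i hi ↦ mul_le_mul_log_add_exp_sub (hf i hi) _
  have hexp : ∑ i ∈ s, exp (g i - C) ≤ ∑ i ∈ s, f i := by
    simp_rw [exp_sub, ← sum_div]
    rwa [div_le_iff₀ (exp_pos C), mul_comm]
  simp only [mul_sub, sum_sub_distrib, sum_add_distrib, ← sum_mul] at hyoung
  linarith

end Real

lemma AddChar.map_sum_eq_prod {ι A M : Type*} [AddCommMonoid A] [CommMonoid M]
    (ψ : AddChar A M) (s : Finset ι) (g : ι → A) : ψ (∑ i ∈ s, g i) = ∏ i ∈ s, ψ (g i) := by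
  classical
  induction s using Finset.induction_on with
  | empty => simp
  | insert i s hi ih => rw [sum_insert hi, prod_insert hi, ψ.map_add_eq_mul, ih]

lemma AddDissociated.sum_sub_sum_sdiff_ne_zero {A : Type*} [AddCommGroup A] [DecidableEq A]
    {Λ s t : Finset A} (hΛ : AddDissociated (Λ : Set A)) (ht : t ⊆ Λ) (ht₀ : t.Nonempty)
    (hs : s ⊆ t) : ∑ γ ∈ s, γ - ∑ γ ∈ t \ s, γ ≠ 0 :=
  sub_ne_zero.2 <| hΛ.ne (coe_subset.2 (hs.trans ht)) (coe_subset.2 (sdiff_subset.trans ht))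
    (sdiff_ne_right.2 (.inl ht₀.ne_empty)).symm

section Randomisation

variable {G A : Type*} [Fintype G] [AddCommGroup A] [Finite A] (ψ : G → AddChar A ℂ)

lemma AddDissociated.sum_prod_add_conj_eq_zero (horth : ∀ γ ≠ 0, ∑ x, ψ x γ = 0)
    {Λ t : Finset A} (hΛ : AddDissociated (Λ : Set A)) (ht : t ⊆ Λ) (ht₀ : t.Nonempty)
    (d : A → ℂ) : ∑ x, ∏ γ ∈ t, (d γ * ψ x γ + conj (d γ * ψ x γ)) = 0 := by
  classical
  simp_rw [prod_add, sum_comm (s := univ)]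
  refine sum_eq_zero fun s hs ↦ ?_
  calc ∑ x, (∏ γ ∈ s, d γ * ψ x γ) * ∏ γ ∈ t \ s, conj (d γ * ψ x γ)
      = (∏ γ ∈ s, d γ) * (∏ γ ∈ t \ s, conj (d γ)) *
          ∑ x, ψ x (∑ γ ∈ s, γ - ∑ γ ∈ t \ s, γ) := by
        simp_rw [mul_sum, map_mul, ← AddChar.map_neg_eq_conj, prod_mul_distrib, sub_eq_add_neg,
          AddChar.map_add_eq_mul, ← sum_neg_distrib, AddChar.map_sum_eq_prod]
        exact sum_congr rfl fun x _ ↦ by ring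
    _ = 0 := by
        rw [horth _ (hΛ.sum_sub_sum_sdiff_ne_zero ht ht₀ (mem_powerset.1 hs)), mul_zero]

lemma AddDissociated.sum_prod_add_re_eq (horth : ∀ γ ≠ 0, ∑ x, ψ x γ = 0) {Λ : Finset A}
    (hΛ : AddDissociated (Λ : Set A)) (c : A → ℝ) (d : A → ℂ) :
    ∑ x, ∏ γ ∈ Λ, (c γ + (d γ * ψ x γ).re) = Fintype.card G * ∏ γ ∈ Λ, c γ := by
  classical
  refine Complex.ofReal_injective ?_
  push_cast
  calc ∑ x, ∏ γ ∈ Λ, ((c γ : ℂ) + ((d γ * ψ x γ).re : ℂ))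
      = ∑ t ∈ Λ.powerset, (∑ x, ∏ γ ∈ t, (d γ * ψ x γ + conj (d γ * ψ x γ))) / 2 ^ #t *
          ∏ γ ∈ Λ \ t, (c γ : ℂ) := by
        simp_rw [re_eq_add_conj, add_comm (c _ : ℂ), prod_add (s := Λ), prod_div_distrib,
          prod_const, sum_div, sum_mul]
        exact sum_comm
    _ = (∑ x : G, ∏ γ ∈ (∅ : Finset A), (d γ * ψ x γ + conj (d γ * ψ x γ))) / 2 ^ #∅ *
          ∏ γ ∈ Λ \ ∅, (c γ : ℂ) := by
        refine sum_eq_single ∅ (fun t ht ht₀ ↦ ?_) (by simp)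
        rw [hΛ.sum_prod_add_conj_eq_zero ψ horth (mem_powerset.1 ht)
          (nonempty_iff_ne_empty.2 ht₀), zero_div, zero_mul]
    _ = Fintype.card G * ∏ γ ∈ Λ, (c γ : ℂ) := by simp

lemma AddDissociated.sum_exp_mul_sum_re_le (horth : ∀ γ ≠ 0, ∑ x, ψ x γ = 0) {Λ : Finset A}
    (hΛ : AddDissociated (Λ : Set A)) {w : A → ℂ} (hw : ∀ γ ∈ Λ, ‖w γ‖ ≤ 1) (t : ℝ) :
    ∑ x, Real.exp (t * ∑ γ ∈ Λ, (w γ * ψ x γ).re) ≤ Fintype.card G * Real.cosh t ^ #Λ := by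
  calc ∑ x, Real.exp (t * ∑ γ ∈ Λ, (w γ * ψ x γ).re)
      ≤ ∑ x, ∏ γ ∈ Λ, (Real.cosh t + (Real.sinh t * w γ * ψ x γ).re) := by
        refine sum_le_sum fun x _ ↦ ?_
        rw [mul_sum, Real.exp_sum]
        refine prod_le_prod (fun _ _ ↦ (Real.exp_pos _).le) fun γ hγ ↦ ?_
        have hre : |(w γ * ψ x γ).re| ≤ 1 := by
          refine (abs_re_le_norm _).trans ?_
          rw [norm_mul, AddChar.norm_apply, mul_one]
          exact hw γ hγ
        rw [mul_assoc (Real.sinh t : ℂ), re_ofReal_mul, mul_comm t, mul_comm (Real.sinh t)]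
        exact Real.exp_mul_le_cosh_add_mul_sinh hre t
    _ = Fintype.card G * Real.cosh t ^ #Λ := by rw [hΛ.sum_prod_add_re_eq ψ horth, prod_const]

end Randomisation

section Chang

variable {G A : Type*} [Fintype G] [AddCommGroup A] (ψ : G → AddChar A ℂ)

/-- With `A` in the role of the dual group `Ĝ`, `ψ x` is evaluation at `x`, and `charCoeff ψ f γ`
is the Fourier coefficient `f̂(γ) = 𝔼ₓ f(x) conj (γ(x))`. -/
noncomputable def charCoeff (f : G → ℝ) (γ : A) : ℂ :=
  (∑ x, (f x : ℂ) * conj (ψ x γ)) / Fintype.card G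

lemma sum_mul_re_charCoeff_div_norm_mul [Nonempty G] (f : G → ℝ) (γ : A) :
    ∑ x, f x * (charCoeff ψ f γ / ‖charCoeff ψ f γ‖ * ψ x γ).re =
      Fintype.card G * ‖charCoeff ψ f γ‖ := by
  set c := charCoeff ψ f γ
  have hsum : ∑ x, (f x : ℂ) * ψ x γ = Fintype.card G * conj c := by
    simp [c, charCoeff, map_sum, mul_div_cancel₀]
  have hc : c / ‖c‖ * (Fintype.card G * conj c) = ((Fintype.card G * ‖c‖ : ℝ) : ℂ) := by
    rcases eq_or_ne c 0 with hc | hc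
    · simp [hc]
    · rw [mul_left_comm, ← mul_div_right_comm, mul_conj']
      push_cast
      field_simp
  calc ∑ x, f x * (c / ‖c‖ * ψ x γ).re = (c / ‖c‖ * ∑ x, (f x : ℂ) * ψ x γ).re := by
        simp_rw [mul_sum, re_sum, ← re_ofReal_mul, mul_left_comm]
    _ = Fintype.card G * ‖c‖ := by rw [hsum, hc, ofReal_re]

lemma AddDissociated.card_mul_sq_le_two_mul_entropy [Finite A] [Nonempty G]
    (horth : ∀ γ ≠ 0, ∑ x, ψ x γ = 0) {f : G → ℝ} (hf₀ : ∀ x, 0 ≤ f x)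
    (hf₁ : ∑ x, f x = Fintype.card G) {δ : ℝ} (hδ : 0 < δ) {Λ : Finset A}
    (hΛ : AddDissociated (Λ : Set A)) (hΛδ : ∀ γ ∈ Λ, δ ≤ ‖charCoeff ψ f γ‖) :
    #Λ * δ ^ 2 ≤ 2 * ((∑ x, f x * Real.log (f x)) / Fintype.card G) := by
  set w : A → ℂ := fun γ ↦ charCoeff ψ f γ / ‖charCoeff ψ f γ‖
  set g : G → ℝ := fun x ↦ δ * ∑ γ ∈ Λ, (w γ * ψ x γ).re
  have hcorr : Fintype.card G * (#Λ * δ ^ 2) ≤ ∑ x, f x * g x := by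
    calc Fintype.card G * (#Λ * δ ^ 2)
        = ∑ γ ∈ Λ, δ * (Fintype.card G * δ) := by rw [sum_const, nsmul_eq_mul]; ring
      _ ≤ ∑ γ ∈ Λ, δ * (Fintype.card G * ‖charCoeff ψ f γ‖) := by
        gcongr with γ hγ
        exact hΛδ γ hγ
      _ = ∑ x, f x * g x := by
        simp_rw [← sum_mul_re_charCoeff_div_norm_mul, g, mul_sum, sum_comm (s := Λ)]
        exact sum_congr rfl fun x _ ↦ sum_congr rfl fun γ _ ↦ by ring
  have hexp : ∑ x, Real.exp (g x) ≤ Real.exp (#Λ * δ ^ 2 / 2) * ∑ x, f x := by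
    have hw : ∀ γ ∈ Λ, ‖w γ‖ ≤ 1 := fun γ _ ↦ by
      simpa [w, norm_div] using div_self_le_one ‖charCoeff ψ f γ‖
    calc ∑ x, Real.exp (g x) ≤ Fintype.card G * Real.cosh δ ^ #Λ :=
        hΛ.sum_exp_mul_sum_re_le ψ horth hw δ
      _ ≤ Fintype.card G * Real.exp (δ ^ 2 / 2) ^ #Λ := by
        gcongr
        exact Real.cosh_le_exp_half_sq δ
      _ = Real.exp (#Λ * δ ^ 2 / 2) * ∑ x, f x := by
        rw [hf₁, ← Real.exp_nat_mul, mul_div_assoc, mul_comm]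
  have hentropy := Real.sum_mul_le_sum_mul_log_add_mul (fun x _ ↦ hf₀ x) g hexp
  rw [hf₁] at hentropy
  rw [← mul_div_assoc, le_div_iff₀ (Nat.cast_pos.2 Fintype.card_pos)]
  linarith

end Chang

theorem chang_theorem_general
    {G A : Type*} [Fintype G] [AddCommGroup A] [Fintype A]
    (u : A → G → ℂ)
    (hmul : ∀ γ γ' x, u (γ + γ') x = u γ x * u γ' x)
    (hone : ∀ x, u 0 x = 1)
    (horth : ∀ γ : A, γ ≠ 0 → ∑ x, u γ x = 0)
    (f : G → ℝ) (hf0 : ∀ x, 0 ≤ f x)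
    (hf1 : (∑ x, f x) / (Fintype.card G) = 1)
    (δ : ℝ) (hδ : 0 < δ) :
    ∃ Λ : Finset A,
      (Λ.card : ℝ) ≤ 4 * ((∑ x, f x * Real.log (f x)) / (Fintype.card G)) / δ ^ 2 ∧
      ∀ γ : A,
        ‖(∑ x, (f x : ℂ) * (starRingEnd ℂ) (u γ x)) / (Fintype.card G : ℂ)‖ > δ →
        ∃ ε : A → ℤ, (∀ lam, ε lam ∈ ({-1, 0, 1} : Set ℤ)) ∧
          γ = ∑ lam ∈ Λ, ε lam • lam := by
  classical
  let ψ : G → AddChar A ℂ := fun x ↦ ⟨(u · x), hone x, (hmul · · x)⟩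
  have hN : (Fintype.card G : ℝ) ≠ 0 := fun h ↦ by simp [h] at hf1
  have : Nonempty G := Fintype.card_pos_iff.1 <| Nat.pos_of_ne_zero <| by exact_mod_cast hN
  have hcard {Λ : Finset A} := AddDissociated.card_mul_sq_le_two_mul_entropy ψ horth hf0
    ((div_eq_one_iff_eq hN).1 hf1) hδ (Λ := Λ)
  set E := (∑ x, f x * Real.log (f x)) / Fintype.card G
  have hE : 0 ≤ E := by simpa using hcard (Λ := ∅) (by simp) (by simp)
  obtain ⟨Λ, -, hΛcard, hspan⟩ := exists_subset_addSpan_card_le_of_forall_addDissociated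
    (s := univ.filter fun γ ↦ δ < ‖charCoeff ψ f γ‖) (d := ⌊2 * E / δ ^ 2⌋₊)
    fun Λ hΛ hdis ↦ Nat.le_floor <| (le_div_iff₀ (by positivity)).2 <|
      hcard hdis fun γ hγ ↦ (mem_filter.1 (hΛ hγ)).2.le
  refine ⟨Λ, ?_, fun γ hγ ↦ ?_⟩
  · calc (#Λ : ℝ) ≤ ⌊2 * E / δ ^ 2⌋₊ := by exact_mod_cast hΛcard
      _ ≤ 2 * E / δ ^ 2 := Nat.floor_le (by positivity)
      _ ≤ 4 * E / δ ^ 2 := by gcongr; linarith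
  · obtain ⟨ε, hε, hsum⟩ := mem_addSpan.1 (hspan (mem_filter.2 ⟨mem_univ γ, hγ⟩))
    exact ⟨ε, fun lam ↦ by simpa using hε lam, hsum.symm⟩

/-- Chang's theorem: for a density `f` on a finite abelian group `G` with
uniform measure and any `δ > 0`, the spectrum `Spec_δ(f)` is covered by a set
`Λ` of dual elements with `|Λ| ≤ 4 Ent_μ(f)/δ²`: every `γ` with
`|f̂(γ)| > δ` is a `{−1,0,1}`-combination of the elements of `Λ`. -/
theorem chang_theorem
    {G A : Type*} [Fintype G] [Nonempty G] [AddCommGroup A] [Fintype A] [DecidableEq A]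
    (u : A → G → ℂ)
    (hmul : ∀ γ γ' x, u (γ + γ') x = u γ x * u γ' x)
    (hone : ∀ x, u 0 x = 1)
    (hconj : ∀ γ x, u (-γ) x = (starRingEnd ℂ) (u γ x))
    (hnorm : ∀ γ x, ‖u γ x‖ = 1)
    (horth : ∀ γ : A, γ ≠ 0 → ∑ x, u γ x = 0)
    (f : G → ℝ) (hf0 : ∀ x, 0 ≤ f x)
    (hf1 : (∑ x, f x) / (Fintype.card G) = 1)
    (δ : ℝ) (hδ : 0 < δ) :
    ∃ Λ : Finset A,
      (Λ.card : ℝ) ≤ 4 * ((∑ x, f x * Real.log (f x)) / (Fintype.card G)) / δ ^ 2 ∧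
      ∀ γ : A,
        ‖(∑ x, (f x : ℂ) * (starRingEnd ℂ) (u γ x)) / (Fintype.card G : ℂ)‖ > δ →
        ∃ ε : A → ℤ, (∀ lam, ε lam ∈ ({-1, 0, 1} : Set ℤ)) ∧
          γ = ∑ lam ∈ Λ, ε lam • lam :=
  chang_theorem_general u hmul hone horth f hf0 hf1 δ hδ
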